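/- arXiv:quant-ph/0410061 — 2 statements merged into one kernel-verified Lean document; each statement's English description precedes it below -/
import Mathlib

section
/- Let ℏ > 0 and let ψ be a Schwartz function on ℝ with ‖ψ‖_{L²(ℝ)} = 1. Let Q be multiplication by x (Qψ(x) = x ψ(x)) and P = (ℏ/i) d/dx. Set q = ⟨Qψ, ψ⟩ and p = ⟨Pψ, ψ⟩ (both real). Then the variances Δq = ‖(Q − q)ψ‖_{L²} and Δp = ‖(P − p)ψ‖_{L²} satisfy Δq · Δp ≥ ℏ/2. -/
open MeasureTheory Complex Topology

noncomputable section

/-- The position operator `Q` applied to `ψ`: multiplication by `x`. -/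
def posOp (ψ : SchwartzMap ℝ ℂ) : ℝ → ℂ := fun x => (x : ℂ) * ψ x

/-- The momentum operator `P = (ℏ/i) d/dx` applied to `ψ`. -/
def momOp (ℏ : ℝ) (ψ : SchwartzMap ℝ ℂ) : ℝ → ℂ :=
  fun x => (ℏ : ℂ) / Complex.I * deriv (fun y : ℝ => ψ y) x

/-- The `L²(ℝ)` inner product `⟨f, g⟩ = ∫ f(x) conj (g x) dx`. -/
def l2Inner (f g : ℝ → ℂ) : ℂ := ∫ x : ℝ, f x * star (g x)

/-- The `L²(ℝ)` norm. -/
def l2Norm (f : ℝ → ℂ) : ℝ := Real.sqrt (∫ x : ℝ, ‖f x‖ ^ 2)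

/-!
Robertson's argument. If `S` and `T` are symmetric, then
`⟪[S, T] ψ, ψ⟫ = ⟪T ψ, S ψ⟫ - ⟪S ψ, T ψ⟫`, so Cauchy–Schwarz bounds `|⟪[S, T] ψ, ψ⟫|` by
`2 ‖S ψ‖ ‖T ψ‖`. On Schwartz space, embedded in `L²`, take `S = Q - q` and `T = P - p`: they are
symmetric because the expectations `q` and `p` of the symmetric operators `Q` and `P` are real,
and `[S, T] = [Q, P] = iℏ`, so `|ℏ| = |⟪iℏ ψ, ψ⟫| ≤ 2 Δq Δp`.
-/

open scoped InnerProductSpace ComplexConjugate SchwartzMap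

section Robertson

variable {𝕜 V E : Type*} [RCLike 𝕜] [AddCommGroup V] [Module 𝕜 V] [NormedAddCommGroup E]
  [InnerProductSpace 𝕜 E]

/-- `S` is a symmetric operator on a domain `V` that `ι` embeds into the Hilbert space `E`. -/
def IsSymmetricOn (ι : V →ₗ[𝕜] E) (S : Module.End 𝕜 V) : Prop :=
  ∀ u v, ⟪ι (S u), ι v⟫_𝕜 = ⟪ι u, ι (S v)⟫_𝕜

variable {ι : V →ₗ[𝕜] E} {S T : Module.End 𝕜 V}

theorem IsSymmetricOn.conj_inner_self_apply (hS : IsSymmetricOn ι S) (ψ : V) :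
    conj ⟪ι ψ, ι (S ψ)⟫_𝕜 = ⟪ι ψ, ι (S ψ)⟫_𝕜 := by
  rw [inner_conj_symm, hS]

theorem IsSymmetricOn.sub_smul_one (hS : IsSymmetricOn ι S) {r : 𝕜} (hr : conj r = r) :
    IsSymmetricOn ι (S - r • 1) := fun u v => by
  simp only [LinearMap.sub_apply, LinearMap.smul_apply, Module.End.one_apply, map_sub, map_smul,
    inner_sub_left, inner_sub_right, inner_smul_left, inner_smul_right, hr, hS u v]

theorem norm_inner_lie_apply_le (hS : IsSymmetricOn ι S) (hT : IsSymmetricOn ι T) (ψ : V) :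
    ‖⟪ι (⁅S, T⁆ ψ), ι ψ⟫_𝕜‖ ≤ 2 * (‖ι (S ψ)‖ * ‖ι (T ψ)‖) := by
  have h : ⟪ι (⁅S, T⁆ ψ), ι ψ⟫_𝕜 = ⟪ι (T ψ), ι (S ψ)⟫_𝕜 - ⟪ι (S ψ), ι (T ψ)⟫_𝕜 := by
    rw [Ring.lie_def, LinearMap.sub_apply, map_sub, inner_sub_left, Module.End.mul_apply,
      Module.End.mul_apply, hS (T ψ) ψ, hT (S ψ) ψ]
  calc ‖⟪ι (⁅S, T⁆ ψ), ι ψ⟫_𝕜‖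
      ≤ ‖⟪ι (T ψ), ι (S ψ)⟫_𝕜‖ + ‖⟪ι (S ψ), ι (T ψ)⟫_𝕜‖ := h ▸ norm_sub_le _ _
    _ ≤ ‖ι (T ψ)‖ * ‖ι (S ψ)‖ + ‖ι (S ψ)‖ * ‖ι (T ψ)‖ :=
        add_le_add (norm_inner_le_norm _ _) (norm_inner_le_norm _ _)
    _ = 2 * (‖ι (S ψ)‖ * ‖ι (T ψ)‖) := by ring

end Robertson

theorem lie_sub_smul_one {R A : Type*} [CommRing R] [Ring A] [Algebra R A] (a b : A) (r s : R) :
    ⁅a - r • 1, b - s • 1⁆ = ⁅a, b⁆ := by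
  simp only [Ring.lie_def, sub_mul, mul_sub, smul_mul_assoc, mul_smul_comm, one_mul, mul_one]
  module

namespace SchwartzMap

def toL2 : 𝓢(ℝ, ℂ) →ₗ[ℂ] Lp ℂ 2 (volume : Measure ℝ) := toLpCLM ℂ ℂ 2 (volume : Measure ℝ)

def position : Module.End ℂ 𝓢(ℝ, ℂ) := smulLeftCLM ℂ (fun x : ℝ => (x : ℂ))

def momentum (ℏ : ℝ) : Module.End ℂ 𝓢(ℝ, ℂ) :=
  ((ℏ : ℂ) / I) • (derivCLM ℂ ℂ : Module.End ℂ 𝓢(ℝ, ℂ))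

theorem position_apply (f : 𝓢(ℝ, ℂ)) (x : ℝ) : position f x = x * f x :=
  smulLeftCLM_apply_apply ofRealCLM.hasTemperateGrowth f x

theorem momentum_apply (ℏ : ℝ) (f : 𝓢(ℝ, ℂ)) (x : ℝ) :
    momentum ℏ f x = ℏ / I * deriv f x := rfl

theorem coe_position (f : 𝓢(ℝ, ℂ)) : ⇑(position f) = posOp f :=
  funext (position_apply f)

theorem coe_momentum (ℏ : ℝ) (f : 𝓢(ℝ, ℂ)) : ⇑(momentum ℏ f) = momOp ℏ f := rfl

theorem inner_toL2 (f g : 𝓢(ℝ, ℂ)) : ⟪toL2 f, toL2 g⟫_ℂ = ∫ x, conj (f x) * g x :=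
  (inner_toL2_toL2_eq f g).trans <| integral_congr_ae <| ae_of_all _ fun _ => mul_comm _ _

theorem l2Inner_eq_inner (f g : 𝓢(ℝ, ℂ)) : l2Inner f g = ⟪toL2 g, toL2 f⟫_ℂ := by
  simp only [inner_toL2, l2Inner, mul_comm (f _), Complex.star_def]

theorem l2Norm_eq_norm (f : 𝓢(ℝ, ℂ)) : l2Norm f = ‖toL2 f‖ := by
  rw [toL2, ContinuousLinearMap.coe_coe, toLpCLM_apply,
    norm_toLp' two_ne_zero ENNReal.ofNat_ne_top, l2Norm, Real.sqrt_eq_rpow]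
  norm_num

theorem inner_toL2_deriv_left (f g : 𝓢(ℝ, ℂ)) :
    ⟪toL2 (derivCLM ℂ ℂ f), toL2 g⟫_ℂ = -⟪toL2 f, toL2 (derivCLM ℂ ℂ g)⟫_ℂ := by
  simp only [inner_toL2, derivCLM_apply]
  have h := integral_bilinear_deriv_right_eq_neg_left f g
    ((ContinuousLinearMap.mul ℝ ℂ).comp conjCLE.toContinuousLinearMap)
  simp only [ContinuousLinearMap.comp_apply, ContinuousLinearEquiv.coe_coe,
    ContinuousAlgEquiv.coeCLE_apply, conjCAE_apply, ContinuousLinearMap.mul_apply'] at h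
  rw [h, neg_neg]

theorem isSymmetricOn_position : IsSymmetricOn toL2 position := fun f g => by
  simp only [inner_toL2, position_apply, map_mul, conj_ofReal]
  exact integral_congr_ae <| ae_of_all _ fun _ => by ring

theorem isSymmetricOn_momentum (ℏ : ℝ) : IsSymmetricOn toL2 (momentum ℏ) := fun f g => by
  have hc : conj ((ℏ : ℂ) / I) = -(ℏ / I) := by simp
  simp only [momentum, LinearMap.smul_apply, map_smul, inner_smul_left, inner_smul_right,
    ContinuousLinearMap.coe_coe, inner_toL2_deriv_left, hc]
  ring

theorem hasDerivAt_position (f : 𝓢(ℝ, ℂ)) (x : ℝ) :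
    HasDerivAt (position f) (f x + x * deriv f x) x := by
  rw [coe_position]
  have h := ((hasDerivAt_id x).ofReal_comp).mul (f.hasDerivAt x)
  simp only [id, ofReal_one, one_mul] at h
  exact h

theorem lie_position_momentum (ℏ : ℝ) : ⁅position, momentum ℏ⁆ = (ℏ * I : ℂ) • 1 := by
  refine LinearMap.ext fun f => SchwartzMap.ext fun x => ?_
  simp only [Ring.lie_def, LinearMap.sub_apply, Module.End.mul_apply, sub_apply, position_apply,
    momentum_apply, div_I, neg_mul, mul_neg, (hasDerivAt_position f x).deriv, sub_neg_eq_add,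
    LinearMap.smul_apply, Module.End.one_apply, smul_apply, smul_eq_mul]
  field_simp
  ring

end SchwartzMap

open SchwartzMap

theorem heisenberg_uncertainty_general (ℏ : ℝ) (ψ : SchwartzMap ℝ ℂ)
    (hψ : l2Norm (fun x => ψ x) = 1) :
    l2Norm (fun x => posOp ψ x - l2Inner (posOp ψ) (fun y => ψ y) * ψ x) *
      l2Norm (fun x => momOp ℏ ψ x - l2Inner (momOp ℏ ψ) (fun y => ψ y) * ψ x) ≥ ℏ / 2 := by
  set q := l2Inner (posOp ψ) (fun y => ψ y)
  set p := l2Inner (momOp ℏ ψ) (fun y => ψ y)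
  have hq : q = ⟪toL2 ψ, toL2 (position ψ)⟫_ℂ := by rw [← l2Inner_eq_inner, coe_position]
  have hp : p = ⟪toL2 ψ, toL2 (momentum ℏ ψ)⟫_ℂ := by rw [← l2Inner_eq_inner, coe_momentum]
  have hS : IsSymmetricOn toL2 (position - q • 1) := isSymmetricOn_position.sub_smul_one
    (hq ▸ isSymmetricOn_position.conj_inner_self_apply ψ)
  have hT : IsSymmetricOn toL2 (momentum ℏ - p • 1) := (isSymmetricOn_momentum ℏ).sub_smul_one
    (hp ▸ (isSymmetricOn_momentum ℏ).conj_inner_self_apply ψ)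
  have hcomm : ‖⟪toL2 (⁅position - q • 1, momentum ℏ - p • 1⁆ ψ), toL2 ψ⟫_ℂ‖ = |ℏ| := by
    rw [lie_sub_smul_one, lie_position_momentum]
    simp [inner_smul_left, ← l2Norm_eq_norm, hψ]
  have hA : (fun x => posOp ψ x - q * ψ x) = ⇑((position - q • 1) ψ) := by
    ext x; simp [position_apply, posOp]
  have hB : (fun x => momOp ℏ ψ x - p * ψ x) = ⇑((momentum ℏ - p • 1) ψ) := by
    ext x; simp [momentum_apply, momOp]
  rw [hA, hB, l2Norm_eq_norm, l2Norm_eq_norm]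
  linarith [norm_inner_lie_apply_le hS hT ψ, le_abs_self ℏ]

/-- **Heisenberg uncertainty principle.**  If `ψ` is a normalized Schwartz state, the
variances of position and momentum satisfy `Δq · Δp ≥ ℏ/2`. -/
theorem heisenberg_uncertainty (ℏ : ℝ) (hℏ : 0 < ℏ) (ψ : SchwartzMap ℝ ℂ)
    (hψ : l2Norm (fun x => ψ x) = 1) :
    l2Norm (fun x => posOp ψ x - l2Inner (posOp ψ) (fun y => ψ y) * ψ x) *
      l2Norm (fun x => momOp ℏ ψ x - l2Inner (momOp ℏ ψ) (fun y => ψ y) * ψ x) ≥ ℏ / 2 :=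
  heisenberg_uncertainty_general ℏ ψ hψ
end
end

section
/- Let f : ℝ → ℂ be bounded and uniformly continuous and let A ∈ ℂ. Then the following are equivalent: (1) lim_{t→∞} f(t) exists and equals A; (2) for every φ ∈ L¹(ℝ), lim_{t→∞} (φ * f)(t) exists and equals A ∫_ℝ φ(r) dr, where (φ * f)(t) = ∫_ℝ φ(t−r) f(r) dr. -/
/-!
If `f → A`, dominated convergence (with dominating function `M ‖φ‖`) applies to
`∫ φ s * f (t - s) ds`. Conversely, the box kernel `η⁻¹ 𝟙_[0, η)` turns the convolution into the
average of `f` over `(t - η, t]`; uniform continuity makes these averages uniformly close to `f`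
for small `η`, so `f` inherits their limit `A`.
-/

open MeasureTheory Complex Topology Filter

variable {𝕜 : Type*} [RCLike 𝕜]

theorem integral_comp_sub_mul_eq_integral_mul_comp_sub (φ f : ℝ → 𝕜) (t : ℝ) :
    ∫ r, φ (t - r) * f r = ∫ s, φ s * f (t - s) := by
  rw [← integral_sub_left_eq_self (fun s => φ s * f (t - s)) volume t]
  simp only [sub_sub_cancel]

theorem tendsto_integral_comp_sub_mul_of_tendsto {φ f : ℝ → 𝕜} {M : ℝ} {A : 𝕜}
    (hφ : Integrable φ) (hf : AEStronglyMeasurable f) (hbd : ∀ t, ‖f t‖ ≤ M)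
    (hA : Tendsto f atTop (𝓝 A)) :
    Tendsto (fun t => ∫ r, φ (t - r) * f r) atTop (𝓝 (A * ∫ r, φ r)) := by
  simp only [integral_comp_sub_mul_eq_integral_mul_comp_sub φ f, mul_comm A, ← integral_mul_const]
  refine tendsto_integral_filter_of_dominated_convergence (fun s => ‖φ s‖ * M)
    (.of_forall fun t => hφ.aestronglyMeasurable.mul
      (hf.comp_quasiMeasurePreserving (quasiMeasurePreserving_sub_left volume t)))
    (.of_forall fun t => .of_forall fun s => ?_) (hφ.norm.mul_const M)
    (.of_forall fun s => tendsto_const_nhds.mul (hA.comp (map_sub_atTop_eq s).le))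
  rw [norm_mul]
  exact mul_le_mul_of_nonneg_left (hbd _) (norm_nonneg _)

-- `Ico` rather than `Ioc`: then `r ↦ boxKernel 𝕜 η (t - r)` lives on `Ioc (t - η) t`, the domain of
-- `∫ r in t - η..t`.
variable (𝕜) in
noncomputable def boxKernel (η : ℝ) : ℝ → 𝕜 :=
  (Set.Ico 0 η).indicator fun _ => ((η⁻¹ : ℝ) : 𝕜)

theorem integrable_boxKernel (η : ℝ) : Integrable (boxKernel 𝕜 η) :=
  (integrable_indicator_iff measurableSet_Ico).2 (integrableOn_const measure_Ico_lt_top.ne)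

theorem integral_boxKernel {η : ℝ} (hη : 0 < η) : ∫ r, boxKernel 𝕜 η r = 1 := by
  rw [boxKernel, integral_indicator measurableSet_Ico, setIntegral_const,
    Real.volume_real_Ico_of_le hη.le, sub_zero, RCLike.real_smul_eq_coe_mul, ← RCLike.ofReal_mul,
    mul_inv_cancel₀ hη.ne', RCLike.ofReal_one]

theorem integral_boxKernel_sub_mul {η : ℝ} (hη : 0 < η) (f : ℝ → 𝕜) (t : ℝ) :
    ∫ r, boxKernel 𝕜 η (t - r) * f r = ⨍ r in t - η..t, f r := by
  have hsupp : (fun r => boxKernel 𝕜 η (t - r) * f r) =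
      (Set.Ioc (t - η) t).indicator fun r => ((η⁻¹ : ℝ) : 𝕜) * f r := by
    ext r
    by_cases hr : r ∈ Set.Ioc (t - η) t
    · have : t - r ∈ Set.Ico 0 η := ⟨by linarith [hr.2], by linarith [hr.1]⟩
      simp [boxKernel, this, hr]
    · have : t - r ∉ Set.Ico 0 η := fun h => hr ⟨by linarith [h.2], by linarith [h.1]⟩
      simp [boxKernel, this, hr]
  rw [hsupp, integral_indicator measurableSet_Ioc, interval_average_eq,
    intervalIntegral.integral_of_le (by linarith), integral_const_mul, sub_sub_cancel,
    RCLike.real_smul_eq_coe_mul]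

section IntervalAverage

variable {E : Type*} [NormedAddCommGroup E] [NormedSpace ℝ E] [CompleteSpace E]

theorem norm_sub_intervalAverage_le {f : ℝ → E} {a b C : ℝ} (c : E) (hab : a < b)
    (hf : IntervalIntegrable f volume a b)
    (hC : ∀ x ∈ Set.uIoc a b, ‖c - f x‖ ≤ C) : ‖c - ⨍ x in a..b, f x‖ ≤ C := by
  have hc : c = ⨍ _ in a..b, c := by
    rw [interval_average_eq, intervalIntegral.integral_const, smul_smul,
      inv_mul_cancel₀ (sub_pos.2 hab).ne', one_smul]
  rw [hc, interval_average_eq, interval_average_eq, ← smul_sub,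
    ← intervalIntegral.integral_sub intervalIntegrable_const hf, norm_smul]
  calc ‖(b - a)⁻¹‖ * ‖∫ x in a..b, c - f x‖ ≤ ‖(b - a)⁻¹‖ * (C * |b - a|) :=
        mul_le_mul_of_nonneg_left (intervalIntegral.norm_integral_le_of_norm_le_const hC)
          (norm_nonneg _)
    _ = C := by
      rw [Real.norm_eq_abs, abs_inv, mul_comm C,
        inv_mul_cancel_left₀ (abs_ne_zero.2 (sub_ne_zero.2 hab.ne'))]

theorem UniformContinuous.exists_norm_sub_intervalAverage_le {f : ℝ → E}
    (hf : UniformContinuous f) {ε : ℝ} (hε : 0 < ε) :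
    ∃ η > 0, ∀ t, ‖f t - ⨍ r in t - η..t, f r‖ ≤ ε := by
  obtain ⟨δ, hδ, hδf⟩ := Metric.uniformContinuous_iff.mp hf ε hε
  refine ⟨δ / 2, by positivity, fun t => norm_sub_intervalAverage_le _ (by linarith)
    (hf.continuous.intervalIntegrable _ _) fun r hr => ?_⟩
  rw [Set.uIoc_of_le (by linarith)] at hr
  rw [← dist_eq_norm]
  refine (hδf ?_).le
  rw [Real.dist_eq, abs_of_nonneg (by linarith [hr.2])]
  linarith [hr.1]

end IntervalAverage

theorem tendsto_of_forall_tendsto_integral_boxKernel_sub_mul {f : ℝ → 𝕜} {A : 𝕜}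
    (hf : UniformContinuous f)
    (h : ∀ η > 0, Tendsto (fun t => ∫ r, boxKernel 𝕜 η (t - r) * f r) atTop (𝓝 A)) :
    Tendsto f atTop (𝓝 A) := by
  refine Metric.tendsto_nhds.2 fun ε hε => ?_
  obtain ⟨η, hη, hfη⟩ := hf.exists_norm_sub_intervalAverage_le (half_pos hε)
  filter_upwards [Metric.tendsto_nhds.1 (h η hη) _ (half_pos hε)] with t ht
  rw [integral_boxKernel_sub_mul hη] at ht
  calc dist (f t) A ≤ dist (f t) (⨍ r in t - η..t, f r) + dist (⨍ r in t - η..t, f r) A :=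
        dist_triangle _ _ _
    _ < ε / 2 + ε / 2 := add_lt_add_of_le_of_lt ((dist_eq_norm _ _).trans_le (hfη t)) ht
    _ = ε := add_halves ε

/-- **Abelian/Tauberian equivalence for convolutions**: a bounded uniformly continuous
function `f` converges to `A` at `+∞` iff for every `φ ∈ L¹` the convolution `φ * f`
converges to `A ∫ φ` at `+∞`. -/
theorem tendsto_iff_convolution_tendsto (f : ℝ → ℂ) (M : ℝ) (hbd : ∀ t, ‖f t‖ ≤ M)
    (huc : UniformContinuous f) (A : ℂ) :
    Tendsto f atTop (𝓝 A) ↔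
      ∀ φ : ℝ → ℂ, Integrable φ (volume : Measure ℝ) →
        Tendsto (fun t : ℝ => ∫ r : ℝ, φ (t - r) * f r) atTop
          (𝓝 (A * ∫ r : ℝ, φ r)) := by
  refine ⟨fun hA φ hφ => tendsto_integral_comp_sub_mul_of_tendsto hφ
    huc.continuous.aestronglyMeasurable hbd hA, fun h => ?_⟩
  refine tendsto_of_forall_tendsto_integral_boxKernel_sub_mul huc fun η hη => ?_
  simpa only [integral_boxKernel hη, mul_one] using h _ (integrable_boxKernel η)
end
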